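/- Let a be an ideal of a commutative Noetherian domain R and let 0 → L →f M →g N → 0 be an e-exact sequence of R-modules with N torsion-free. Then 0 → Γ_a(L) → Γ_a(M) → Γ_a(N) → 0 is e-exact; in particular Im(Γ_a(g)) is an essential submodule of Γ_a(N). -/
import Mathlib


universe u

variable {R : Type u} [CommRing R]

/-- The `a`-torsion submodule `Γ_a(M) = {x : aⁿ • x = 0 for some n ≥ 1}`. -/
def gammaTorsion (a : Ideal R) (M : Type u) [AddCommGroup M] [Module R M] : Submodule R M :=
  ⨆ n : ℕ, Submodule.torsionBySet R M ((a ^ (n + 1) : Ideal R) : Set R)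

/-- `N` is an essential submodule of `N'` (both submodules of `M`). -/
def EssentialIn {M : Type u} [AddCommGroup M] [Module R M] (N N' : Submodule R M) : Prop :=
  N ≤ N' ∧ ∀ K : Submodule R M, K ≤ N' → K ≠ ⊥ → N ⊓ K ≠ ⊥

lemma mem_gammaTorsion_iff {a : Ideal R} {M : Type u} [AddCommGroup M] [Module R M] {x : M} :
    x ∈ gammaTorsion a M ↔ ∃ n : ℕ, ∀ r ∈ (a ^ (n + 1) : Ideal R), r • x = 0 := by
  unfold gammaTorsion
  rw [Submodule.mem_iSup_of_directed]
  · constructor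
    · rintro ⟨n, hn⟩
      exact ⟨n, fun r hr => (Submodule.mem_torsionBySet_iff _ _).mp hn ⟨r, hr⟩⟩
    · rintro ⟨n, hn⟩
      exact ⟨n, (Submodule.mem_torsionBySet_iff _ _).mpr fun r => hn r r.2⟩
  · intro i j
    refine ⟨max i j, ?_, ?_⟩ <;>
      exact Submodule.torsionBySet_le_torsionBySet_of_subset
        (Ideal.pow_le_pow_right (by omega))

lemma gammaTorsion_map {a : Ideal R} {M N : Type u} [AddCommGroup M] [Module R M]
    [AddCommGroup N] [Module R N] (φ : M →ₗ[R] N) {x : M} (hx : x ∈ gammaTorsion a M) :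
    φ x ∈ gammaTorsion a N := by
  obtain ⟨n, hn⟩ := mem_gammaTorsion_iff.mp hx
  exact mem_gammaTorsion_iff.mpr ⟨n, fun r hr => by
    rw [← map_smul, hn r hr, map_zero]⟩

lemma gammaTorsion_bot {M : Type u} [AddCommGroup M] [Module R M] :
    gammaTorsion (⊥ : Ideal R) M = ⊤ := by
  refine top_unique fun x _ => mem_gammaTorsion_iff.mpr ⟨0, fun r hr => ?_⟩
  rw [pow_one] at hr
  rw [Ideal.mem_bot.mp hr, zero_smul]

/-- if `0 → L → M → N → 0` is e-exact and `N` is torsion-free, then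
`0 → Γ_a(L) → Γ_a(M) → Γ_a(N) → 0` is e-exact. -/
theorem gamma_eExact_of_torsionFree [IsDomain R] [IsNoetherianRing R] (a : Ideal R)
    {L M N : Type u} [AddCommGroup L] [AddCommGroup M] [AddCommGroup N]
    [Module R L] [Module R M] [Module R N]
    (f : L →ₗ[R] M) (g : M →ₗ[R] N)
    (hf : Function.Injective f)
    (hmid : EssentialIn (R := R) (LinearMap.range f) (LinearMap.ker g))
    (him : EssentialIn (R := R) (LinearMap.range g) (⊤ : Submodule R N))
    (htfN : ∀ (r : R) (x : N), r • x = 0 → r ≠ 0 → x = 0) :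
    (∀ x y : gammaTorsion a L, f x = f y → x = y) ∧
    EssentialIn (R := R) (Submodule.map f (gammaTorsion a L))
      (LinearMap.ker g ⊓ gammaTorsion a M) ∧
    EssentialIn (R := R) (Submodule.map g (gammaTorsion a M)) (gammaTorsion a N) := by
  refine ⟨fun x y h => Subtype.ext (hf h), ⟨?_, ?_⟩, ?_⟩
  · rintro _ ⟨l, hl, rfl⟩
    exact ⟨hmid.1 ⟨l, rfl⟩, gammaTorsion_map f hl⟩
  · -- essentiality in the middle
    intro K hK hK0
    have h1 : LinearMap.range f ⊓ K ≠ ⊥ :=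
      hmid.2 K (hK.trans inf_le_left) hK0
    have h2 : LinearMap.range f ⊓ K ≤ Submodule.map f (gammaTorsion a L) ⊓ K := by
      rintro x ⟨⟨l, rfl⟩, hxK⟩
      refine ⟨⟨l, ?_, rfl⟩, hxK⟩
      have hxΓ : f l ∈ gammaTorsion a M := (hK hxK).2
      obtain ⟨n, hn⟩ := mem_gammaTorsion_iff.mp hxΓ
      refine mem_gammaTorsion_iff.mpr ⟨n, fun r hr => hf ?_⟩
      rw [map_smul, hn r hr, map_zero]
    intro hbot
    exact h1 (le_bot_iff.mp (hbot ▸ h2))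
  · by_cases ha : a = ⊥
    · subst ha
      rw [gammaTorsion_bot, gammaTorsion_bot, Submodule.map_top]
      exact him
    · -- here Γ_a(N) = ⊥ since N is torsion-free
      have hN : gammaTorsion a N = ⊥ := by
        refine (Submodule.eq_bot_iff _).mpr fun x hx => ?_
        obtain ⟨n, hn⟩ := mem_gammaTorsion_iff.mp hx
        obtain ⟨r, hrA, hr0⟩ := Submodule.exists_mem_ne_zero_of_ne_bot ha
        exact htfN (r ^ (n + 1)) x (hn _ (Ideal.pow_mem_pow hrA _)) (pow_ne_zero _ hr0)
      constructor
      · rintro _ ⟨m, hm, rfl⟩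
        rw [hN]
        exact hN ▸ gammaTorsion_map g hm
      · intro K hK hK0
        rw [hN] at hK
        exact absurd (le_bot_iff.mp hK) hK0
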